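/- For all a, c ∈ SH(n): the element b := a⁻¹·(a·c²·a)^{1/2}·a⁻¹ is the unique element of SH(n) with m(a,b) = c, and the element b' := (a⁻¹·c²·a⁻¹)^{1/2} is the unique element of SH(n) with m(b',a) = c. Hence for each a ∈ SH(n) the left and right translations by a for the operation m are bijections of SH(n). -/

import Mathlib

open Matrix ComplexOrder

/-- The set of `n × n` positive-definite Hermitian complex matrices of
determinant `1` (`Matrix.PosDef` includes Hermitian-ness). -/
def SH (n : ℕ) : Set (Matrix (Fin n) (Fin n) ℂ) :=
  {a | a.PosDef ∧ a.det = 1}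

/-- The unique positive-semidefinite square root of a positive-semidefinite
matrix (junk value `0` otherwise). -/
noncomputable def msqrt {n : ℕ} (p : Matrix (Fin n) (Fin n) ℂ) :
    Matrix (Fin n) (Fin n) ℂ :=
  letI := Classical.dec p.PosSemidef
  if h : p.PosSemidef then
    (h.1.eigenvectorUnitary : Matrix (Fin n) (Fin n) ℂ) *
      diagonal ((↑) ∘ (fun x : ℝ => Real.sqrt x) ∘ h.1.eigenvalues) *
      (star h.1.eigenvectorUnitary : Matrix (Fin n) (Fin n) ℂ)
  else 0

/-- The loop multiplication `m(a,b) := (b·a²·b)^{1/2}` on `SH n`. -/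
noncomputable def mSH {n : ℕ} (a b : Matrix (Fin n) (Fin n) ℂ) :
    Matrix (Fin n) (Fin n) ℂ :=
  msqrt (b * a ^ 2 * b)

/-!
Both translations reduce to the uniqueness of positive square roots: `m(a, b) = c` says
`b * a ^ 2 * b = c ^ 2`. Conjugating by `a` turns this into `(a * b * a) ^ 2 = a * c ^ 2 * a`,
whose unique positive solution is `a * b * a = (a * c ^ 2 * a) ^ (1/2)`. Likewise
`m(b', a) = c` says `b' ^ 2 = a⁻¹ * c ^ 2 * a⁻¹`, so `b' = (a⁻¹ * c ^ 2 * a⁻¹) ^ (1/2)`.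
Positivity and determinant `1` are preserved by inverses, squares, square roots and
`b ↦ a * b * a`.
-/

open scoped MatrixOrder

namespace Matrix

variable {ι R : Type*} [Fintype ι]

section Ring

variable [Ring R] [PartialOrder R] [StarRing R] {a p : Matrix ι ι R}

lemma PosSemidef.mul_mul_same_of_isHermitian (hp : p.PosSemidef) (ha : a.IsHermitian) :
    (a * p * a).PosSemidef := by
  simpa only [ha.eq] using hp.conjTranspose_mul_mul_same a

lemma IsHermitian.posSemidef_sq [StarOrderedRing R] [DecidableEq ι] (ha : a.IsHermitian) :
    (a ^ 2).PosSemidef := by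
  simpa only [mul_one, ← sq] using PosSemidef.one.mul_mul_same_of_isHermitian ha

end Ring

lemma eq_inv_mul_mul_inv_iff [DecidableEq ι] [CommRing R] {a b q : Matrix ι ι R}
    (ha : IsUnit a) : b = a⁻¹ * q * a⁻¹ ↔ a * b * a = q := by
  have := ha.invertible
  constructor
  · rintro rfl
    simp [Matrix.mul_assoc]
  · rintro rfl
    simp [Matrix.mul_assoc]

end Matrix

variable {n : ℕ} {a b c p q : Matrix (Fin n) (Fin n) ℂ}

lemma msqrt_eq_cfcSqrt (hp : p.PosSemidef) : msqrt p = CFC.sqrt p := by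
  rw [msqrt, dif_pos hp, CFC.sqrt_eq_cfc, cfc_nnreal_eq_real _ p, hp.1.cfc_eq]
  simp only [IsHermitian.cfc, Unitary.conjStarAlgAut_apply]
  congr 3
  funext i
  simp [max_eq_left (hp.eigenvalues_nonneg i)]

lemma msqrt_eq_iff (hp : p.PosSemidef) (hq : q.PosSemidef) : msqrt p = q ↔ q ^ 2 = p := by
  rw [msqrt_eq_cfcSqrt hp, CFC.sqrt_eq_iff p q hp.nonneg hq.nonneg, sq]

lemma mSH_eq_iff (ha : a.IsHermitian) (hb : b.IsHermitian) (hc : c.PosSemidef) :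
    mSH a b = c ↔ b * a ^ 2 * b = c ^ 2 := by
  rw [mSH, msqrt_eq_iff (ha.posSemidef_sq.mul_mul_same_of_isHermitian hb) hc, eq_comm]

lemma mSH_left_eq_iff (ha : a.IsHermitian) (hu : IsUnit a) (hb : b.PosSemidef)
    (hc : c.PosSemidef) : mSH a b = c ↔ b = a⁻¹ * msqrt (a * c ^ 2 * a) * a⁻¹ := by
  have hsq : (a * b * a) ^ 2 = a * (b * a ^ 2 * b) * a := by
    simp only [sq, Matrix.mul_assoc]
  calc mSH a b = c ↔ b * a ^ 2 * b = c ^ 2 := mSH_eq_iff ha hb.isHermitian hc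
    _ ↔ (a * b * a) ^ 2 = a * c ^ 2 * a := by
      rw [hsq, hu.mul_left_inj, hu.mul_right_inj]
    _ ↔ a * b * a = msqrt (a * c ^ 2 * a) := by
      rw [eq_comm (b := msqrt _), msqrt_eq_iff ((hc.pow 2).mul_mul_same_of_isHermitian ha)
        (hb.mul_mul_same_of_isHermitian ha)]
    _ ↔ b = a⁻¹ * msqrt (a * c ^ 2 * a) * a⁻¹ := (eq_inv_mul_mul_inv_iff hu).symm

lemma mSH_right_eq_iff (ha : a.IsHermitian) (hu : IsUnit a) (hb : b.PosSemidef)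
    (hc : c.PosSemidef) : mSH b a = c ↔ b = msqrt (a⁻¹ * c ^ 2 * a⁻¹) := by
  calc mSH b a = c ↔ a * b ^ 2 * a = c ^ 2 := mSH_eq_iff hb.isHermitian ha hc
    _ ↔ b ^ 2 = a⁻¹ * c ^ 2 * a⁻¹ := (eq_inv_mul_mul_inv_iff hu).symm
    _ ↔ b = msqrt (a⁻¹ * c ^ 2 * a⁻¹) := by
      rw [eq_comm (a := b), msqrt_eq_iff ((hc.pow 2).mul_mul_same_of_isHermitian ha.inv) hb]

namespace SH

lemma mem_of_posSemidef (hp : p.PosSemidef) (hd : p.det = 1) : p ∈ SH n :=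
  ⟨hp.posDef_iff_det_ne_zero.2 (by simp [hd]), hd⟩

lemma isUnit (ha : a ∈ SH n) : IsUnit a :=
  (isUnit_iff_isUnit_det a).2 (by simp [ha.2])

lemma inv_mem (ha : a ∈ SH n) : a⁻¹ ∈ SH n :=
  ⟨ha.1.inv, by simp [det_nonsing_inv, ha.2]⟩

lemma sq_mem (ha : a ∈ SH n) : a ^ 2 ∈ SH n :=
  mem_of_posSemidef (ha.1.posSemidef.pow 2) (by simp [det_pow, ha.2])

lemma mul_mul_same_mem (ha : a ∈ SH n) (hb : b ∈ SH n) : a * b * a ∈ SH n :=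
  mem_of_posSemidef (hb.1.posSemidef.mul_mul_same_of_isHermitian ha.1.isHermitian)
    (by simp [det_mul, ha.2, hb.2])

lemma msqrt_mem (hp : p ∈ SH n) : msqrt p ∈ SH n := by
  rw [msqrt_eq_cfcSqrt hp.1.posSemidef]
  exact mem_of_posSemidef (CFC.sqrt_nonneg p).posSemidef
    (by simp [hp.1.posSemidef.det_sqrt, hp.2])

end SH

/-- For all `a c ∈ SH n`, `b := a⁻¹·(a·c²·a)^{1/2}·a⁻¹` is the
unique element of `SH n` with `m(a,b) = c`, and `b' := (a⁻¹·c²·a⁻¹)^{1/2}` is the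
unique element of `SH n` with `m(b',a) = c`; hence the left and right
translations by `a` for `m` are bijections of `SH n`. -/
theorem stmt_13 (n : ℕ) (a c : Matrix (Fin n) (Fin n) ℂ)
    (ha : a ∈ SH n) (hc : c ∈ SH n) :
    (a⁻¹ * msqrt (a * c ^ 2 * a) * a⁻¹ ∈ SH n ∧
      mSH a (a⁻¹ * msqrt (a * c ^ 2 * a) * a⁻¹) = c ∧
      ∀ b ∈ SH n, mSH a b = c → b = a⁻¹ * msqrt (a * c ^ 2 * a) * a⁻¹) ∧
    (msqrt (a⁻¹ * c ^ 2 * a⁻¹) ∈ SH n ∧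
      mSH (msqrt (a⁻¹ * c ^ 2 * a⁻¹)) a = c ∧
      ∀ b' ∈ SH n, mSH b' a = c → b' = msqrt (a⁻¹ * c ^ 2 * a⁻¹)) := by
  have hu : IsUnit a := SH.isUnit ha
  have left_iff {b} (hb : b ∈ SH n) :=
    mSH_left_eq_iff ha.1.isHermitian hu hb.1.posSemidef hc.1.posSemidef
  have right_iff {b} (hb : b ∈ SH n) :=
    mSH_right_eq_iff ha.1.isHermitian hu hb.1.posSemidef hc.1.posSemidef
  have hb : a⁻¹ * msqrt (a * c ^ 2 * a) * a⁻¹ ∈ SH n :=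
    SH.mul_mul_same_mem (SH.inv_mem ha) (SH.msqrt_mem (SH.mul_mul_same_mem ha (SH.sq_mem hc)))
  have hb' : msqrt (a⁻¹ * c ^ 2 * a⁻¹) ∈ SH n :=
    SH.msqrt_mem (SH.mul_mul_same_mem (SH.inv_mem ha) (SH.sq_mem hc))
  exact ⟨⟨hb, (left_iff hb).2 rfl, fun b hb => (left_iff hb).1⟩,
    ⟨hb', (right_iff hb').2 rfl, fun b' hb' => (right_iff hb').1⟩⟩
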